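/- arXiv:1807.06947 — 2 statements merged into one kernel-verified Lean document; each statement's English description precedes it below -/
import Mathlib

section
/- Let H be a k-uniform hypergraph with m hyperedges on an n-element vertex set, with n ≥ k ≥ t ≥ 1. Suppose that every k-element vertex subset that is not a hyperedge of H intersects some hyperedge of H in at least t vertices. Then m ≥ C(n, k)/(d + 1), where d = ∑_{a=1}^{k−t} C(k, k−a)·C(n−k, a). -/
/-!
Every `k`-set lies in the `t`-ball `{e : t ≤ |e ∩ f|}` of some hyperedge `f`: of itself if it is a
hyperedge, of the hyperedge given by saturation otherwise. A `k`-set `e` in the `t`-ball of a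
`k`-set `f` is determined by its `k - a` vertices inside `f` and its `a ≤ k - t` vertices outside,
so the ball has at most `∑_{a=0}^{k-t} C(k, k-a) C(n-k, a) = d + 1` elements. Double counting
gives `C(n, k) ≤ m (d + 1)`.
-/

open Finset

namespace Finset

variable {α : Type*} [Fintype α] [DecidableEq α]

theorem card_filter_card_sdiff_eq_le (f : Finset α) (k a : ℕ) :
    #{e ∈ powersetCard k univ | #(e \ f) = a} ≤
      (#f).choose (k - a) * (Fintype.card α - #f).choose a := by
  rw [← card_compl, ← card_powersetCard, ← card_powersetCard, ← card_product]
  refine card_le_card_of_injOn (fun e => (e ∩ f, e \ f)) ?_ ?_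
  · intro e he
    simp only [mem_coe, mem_filter, mem_powersetCard_univ] at he
    have hsplit := card_inter_add_card_sdiff e f
    simp only [mem_coe, mem_product, mem_powersetCard]
    refine ⟨⟨inter_subset_right, by omega⟩, ⟨?_, he.2⟩⟩
    intro x hx
    simpa using (mem_sdiff.1 hx).2
  · intro e₁ _ e₂ _ h
    simp only [Prod.mk.injEq] at h
    rw [← sdiff_union_inter e₁ f, ← sdiff_union_inter e₂ f, h.1, h.2]

theorem card_filter_le_card_inter_le (f : Finset α) (k t : ℕ) :
    #{e ∈ powersetCard k univ | t ≤ #(e ∩ f)} ≤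
      ∑ a ∈ Icc 0 (k - t), (#f).choose (k - a) * (Fintype.card α - #f).choose a := by
  have hcover : {e ∈ powersetCard k (univ : Finset α) | t ≤ #(e ∩ f)} ⊆
      (Icc 0 (k - t)).biUnion fun a => {e ∈ powersetCard k univ | #(e \ f) = a} := by
    intro e he
    simp only [mem_filter, mem_powersetCard_univ] at he
    have hsplit := card_inter_add_card_sdiff e f
    simp only [mem_biUnion, mem_Icc, mem_filter, mem_powersetCard_univ]
    exact ⟨#(e \ f), ⟨Nat.zero_le _, by omega⟩, he.1, rfl⟩
  calc _ ≤ _ := card_le_card hcover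
    _ ≤ _ := card_biUnion_le
    _ ≤ _ := sum_le_sum fun a _ => card_filter_card_sdiff_eq_le f k a

end Finset

theorem sum_choose_mul_choose_eq_one_add (k t N : ℕ) :
    ∑ a ∈ Icc 0 (k - t), k.choose (k - a) * N.choose a =
      ∑ a ∈ Icc 1 (k - t), k.choose (k - a) * N.choose a + 1 := by
  rw [← insert_Icc_add_one_left_eq_Icc (Nat.zero_le _), sum_insert (by simp)]
  simp [add_comm]

theorem stmt_6_general {V : Type*} [Fintype V] [DecidableEq V] (n k t m : ℕ)
    (hn : Fintype.card V = n) (htk : t ≤ k)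
    (H : Finset (Finset V)) (hunif : ∀ e ∈ H, e.card = k) (hm : H.card = m)
    (hsat : ∀ e' : Finset V, e'.card = k → e' ∉ H → ∃ f ∈ H, t ≤ (e' ∩ f).card) :
    (n.choose k : ℝ) /
        ((∑ a ∈ Finset.Icc 1 (k - t), k.choose (k - a) * (n - k).choose a : ℕ) + 1) ≤ m := by
  set d := ∑ a ∈ Icc 1 (k - t), k.choose (k - a) * (n - k).choose a
  have hcovered : ∀ e ∈ powersetCard k (univ : Finset V),
      1 ≤ #(H.bipartiteAbove (fun e f => t ≤ #(e ∩ f)) e) := by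
    intro e he
    rw [mem_powersetCard_univ] at he
    refine card_pos.2 ?_
    by_cases heH : e ∈ H
    · exact ⟨e, mem_filter.2 ⟨heH, show t ≤ #(e ∩ e) by rwa [inter_self, he]⟩⟩
    · obtain ⟨f, hf, hef⟩ := hsat e he heH
      exact ⟨f, mem_filter.2 ⟨hf, hef⟩⟩
  have hball : ∀ f ∈ H,
      #((powersetCard k univ).bipartiteBelow (fun e f => t ≤ #(e ∩ f)) f) ≤ d + 1 := by
    intro f hf
    have := card_filter_le_card_inter_le f k t
    rwa [hunif f hf, hn, sum_choose_mul_choose_eq_one_add] at this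
  have key := card_mul_le_card_mul _ hcovered hball
  rw [card_powersetCard, card_univ, hn, mul_one, hm] at key
  rw [div_le_iff₀ (by positivity)]
  exact_mod_cast key

/-- If every non-edge `k`-set intersects some hyperedge of a `k`-uniform hypergraph `H`
in at least `t` vertices, then `H` has at least `C(n,k)/(d+1)` hyperedges, where
`d = ∑_{a=1}^{k-t} C(k,k-a) * C(n-k,a)`. -/
theorem stmt_6 {V : Type*} [Fintype V] [DecidableEq V] (n k t m : ℕ)
    (hn : Fintype.card V = n) (hkn : k ≤ n) (htk : t ≤ k) (ht : 1 ≤ t)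
    (H : Finset (Finset V)) (hunif : ∀ e ∈ H, e.card = k) (hm : H.card = m)
    (hsat : ∀ e' : Finset V, e'.card = k → e' ∉ H → ∃ f ∈ H, t ≤ (e' ∩ f).card) :
    (n.choose k : ℝ) /
        ((∑ a ∈ Finset.Icc 1 (k - t), k.choose (k - a) * (n - k).choose a : ℕ) + 1) ≤ m :=
  stmt_6_general n k t m hn htk H hunif hm hsat
end

section
/- Let 3 ≤ r < k < ℓ be integers. Every k-uniform hypergraph H on n vertices that contains no Berge-P_ℓ^{(r)} has at most (ℓ − r + 1)·C(ℓ, k)·C(n, r−1) hyperedges. -/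
/-- The hyperedges of the `r`-uniform tight path on `ℓ` vertices: the sets of `r`
consecutive vertices. -/
def tightPath (r ℓ : ℕ) : Finset (Finset (Fin ℓ)) :=
  (Finset.range (ℓ - r + 1)).image fun i =>
    Finset.univ.filter fun v : Fin ℓ => i ≤ v.val ∧ v.val < i + r

/-- `H` contains a Berge copy of the hypergraph `F`. -/
def BergeCopy {W V : Type*} [DecidableEq V]
    (F : Finset (Finset W)) (H : Finset (Finset V)) : Prop :=
  ∃ ψ : W ↪ V, ∃ φ : {e // e ∈ F} → Finset V, Function.Injective φ ∧
    ∀ e : {e // e ∈ F}, φ e ∈ H ∧ ∀ w ∈ e.val, ψ w ∈ φ e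

/-!
Delete edges through `(r - 1)`-sets of degree at most `D = ℓ - r + C(ℓ, k)` as long as there
are any. Each deletion lowers `∑_S min (deg S, D) ≤ C(n, r - 1) * D`, so at most that many edges
are lost. If an edge survives, every `(r - 1)`-subset of a surviving edge has degree above `D`,
and a Berge tight path grows greedily: its last `r - 1` vertices lie in more than `D` edges, at
most `ℓ - r` of which are already used and at most `C(ℓ, k)` of which lie inside the vertex set
of the path, so another one brings a new vertex.
-/

open Finset Function

section BergeTightPath

lemma Set.injOn_update_Iio_succ {α : Type*} {g : ℕ → α} {m : ℕ} {a : α}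
    (hg : Set.InjOn g (Set.Iio m)) (ha : a ∉ g '' Set.Iio m) :
    Set.InjOn (update g m a) (Set.Iio (m + 1)) := by
  have hagree : Set.EqOn (update g m a) g (Set.Iio m) := fun j hj =>
    update_of_ne (ne_of_lt hj) _ _
  rw [← Order.succ_eq_add_one, Order.Iio_succ_eq_insert,
    Set.injOn_insert Set.self_notMem_Iio, hagree.image_eq, update_self]
  exact ⟨hg.congr hagree.symm, ha⟩

variable {V : Type*}

/-- Only the vertices `v 0, …, v (m - 1)` and the edges `f 0, …, f (m - r)` matter. -/
structure IsBergeTightPath (G : Finset (Finset V)) (r m : ℕ) (v : ℕ → V)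
    (f : ℕ → Finset V) : Prop where
  injOn_vertex : Set.InjOn v (Set.Iio m)
  injOn_edge : Set.InjOn f (Set.Iio (m - r + 1))
  edge_mem : ∀ i < m - r + 1, f i ∈ G
  vertex_mem : ∀ i < m - r + 1, ∀ j ∈ Ico i (i + r), v j ∈ f i

def pathTail [DecidableEq V] (v : ℕ → V) (r m : ℕ) : Finset V := (Ico (m - r + 1) m).image v

namespace IsBergeTightPath

variable {G : Finset (Finset V)} {r m : ℕ} {v : ℕ → V} {f : ℕ → Finset V}

lemma mono {G' : Finset (Finset V)} (h : IsBergeTightPath G r m v f) (hG : G ⊆ G') :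
    IsBergeTightPath G' r m v f :=
  ⟨h.injOn_vertex, h.injOn_edge, fun i hi => hG (h.edge_mem i hi), h.vertex_mem⟩

lemma exists_of_mem {e : Finset V} (he : e ∈ G) (hr : 0 < r) (hre : r ≤ #e) :
    ∃ v f, IsBergeTightPath G r r v f := by
  obtain ⟨y, hy⟩ := card_pos.mp (hr.trans_le hre)
  let v : ℕ → V := fun j => if hj : j < #e then e.equivFin.symm ⟨j, hj⟩ else y
  have hv : ∀ j, v j ∈ e := fun j => by
    by_cases hj : j < #e
    · simp [v, hj]
    · simp [v, hj, hy]
  refine ⟨v, fun _ => e, fun a ha b hb hab => ?_, fun a ha b hb _ => ?_, fun _ _ => he,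
    fun _ _ j _ => hv j⟩
  · have ha' : a < #e := (Set.mem_Iio.mp ha).trans_le hre
    have hb' : b < #e := (Set.mem_Iio.mp hb).trans_le hre
    simpa [v, ha', hb'] using hab
  · simp only [Set.mem_Iio] at ha hb
    omega

variable [DecidableEq V]

lemma bergeCopy (h : IsBergeTightPath G r m v f) : BergeCopy (tightPath r m) G := by
  have hidx : ∀ e : {e // e ∈ tightPath r m}, ∃ i < m - r + 1,
      e.val = univ.filter fun w : Fin m => i ≤ w.val ∧ w.val < i + r := by
    rintro ⟨e, he⟩
    obtain ⟨i, hi, rfl⟩ := mem_image.mp he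
    exact ⟨i, mem_range.mp hi, rfl⟩
  choose idx hidx_lt hidx_eq using hidx
  refine ⟨⟨fun w => v w, fun a b hab => Fin.ext (h.injOn_vertex a.isLt b.isLt hab)⟩,
    fun e => f (idx e), fun a b hab => ?_, fun e => ⟨h.edge_mem _ (hidx_lt e), ?_⟩⟩
  · apply Subtype.ext
    rw [hidx_eq a, hidx_eq b, h.injOn_edge (hidx_lt a) (hidx_lt b) hab]
  · intro w hw
    rw [hidx_eq e, mem_filter] at hw
    exact h.vertex_mem _ (hidx_lt e) w (mem_Ico.mpr hw.2)

lemma card_pathTail (h : IsBergeTightPath G r m v f) (hrm : r ≤ m) :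
    #(pathTail v r m) = r - 1 := by
  rw [pathTail, card_image_of_injOn, Nat.card_Ico]
  · omega
  · intro a ha b hb hab
    exact h.injOn_vertex (by simp only [coe_Ico, Set.mem_Ico, Set.mem_Iio] at ha ⊢; omega)
      (by simp only [coe_Ico, Set.mem_Ico, Set.mem_Iio] at hb ⊢; omega) hab

lemma pathTail_subset (h : IsBergeTightPath G r m v f) (hrm : r ≤ m) :
    pathTail v r m ⊆ f (m - r) := by
  intro x hx
  obtain ⟨j, hj, rfl⟩ := mem_image.mp hx
  rw [mem_Ico] at hj
  exact h.vertex_mem _ (by omega) j (mem_Ico.mpr ⟨by omega, by omega⟩)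

lemma update {en : Finset V} {x : V} (h : IsBergeTightPath G r m v f) (hrm : r ≤ m)
    (hen : en ∈ G) (htail : pathTail v r m ⊆ en) (hen_new : en ∉ f '' Set.Iio (m - r + 1))
    (hx : x ∈ en) (hx_new : x ∉ v '' Set.Iio m) :
    IsBergeTightPath G r (m + 1) (update v m x) (update f (m - r + 1) en) := by
  have hlen : m + 1 - r + 1 = m - r + 1 + 1 := by omega
  refine ⟨Set.injOn_update_Iio_succ h.injOn_vertex hx_new, ?_, fun i hi => ?_,
    fun i hi j hj => ?_⟩
  · rw [hlen]
    exact Set.injOn_update_Iio_succ h.injOn_edge hen_new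
  · rcases eq_or_ne i (m - r + 1) with rfl | hi'
    · rwa [update_self]
    · rw [update_of_ne hi']
      exact h.edge_mem i (by omega)
  · rw [mem_Ico] at hj
    rcases eq_or_ne i (m - r + 1) with rfl | hi'
    · rw [update_self]
      rcases eq_or_ne j m with rfl | hj'
      · rwa [update_self]
      · rw [update_of_ne hj']
        exact htail (mem_image_of_mem v (mem_Ico.mpr ⟨hj.1, by omega⟩))
    · rw [update_of_ne hi', update_of_ne (by omega)]
      exact h.vertex_mem i (by omega) j (mem_Ico.mpr hj)

end IsBergeTightPath

variable [DecidableEq V]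

def setDegree (G : Finset (Finset V)) (S : Finset V) : ℕ := #{e ∈ G | S ⊆ e}

lemma setDegree_mono {G₁ G₂ : Finset (Finset V)} (h : G₁ ⊆ G₂) (S : Finset V) :
    setDegree G₁ S ≤ setDegree G₂ S :=
  card_le_card (filter_subset_filter _ h)

lemma setDegree_erase_add_one {G : Finset (Finset V)} {e S : Finset V} (he : e ∈ G)
    (hS : S ⊆ e) : setDegree (G.erase e) S + 1 = setDegree G S := by
  rw [setDegree, filter_erase]
  exact card_erase_add_one (mem_filter.mpr ⟨he, hS⟩)

namespace IsBergeTightPath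

variable {G : Finset (Finset V)} {r m : ℕ} {v : ℕ → V} {f : ℕ → Finset V}

lemma exists_succ {k : ℕ} (h : IsBergeTightPath G r m v f) (hrm : r ≤ m)
    (hunif : ∀ e ∈ G, #e = k)
    (hdeg : ∀ e ∈ G, ∀ S ⊆ e, #S = r - 1 → m - r + 1 + m.choose k < setDegree G S) :
    ∃ v' f', IsBergeTightPath G r (m + 1) v' f' := by
  set used := (range (m - r + 1)).image f
  set inside := ((range m).image v).powersetCard k
  have hused : #used ≤ m - r + 1 := card_image_le.trans (card_range _).le
  have hinside : #inside ≤ m.choose k := by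
    rw [card_powersetCard]
    exact Nat.choose_le_choose k (card_image_le.trans (card_range m).le)
  have hmany : #(used ∪ inside) < setDegree G (pathTail v r m) :=
    (card_union_le used inside).trans_lt <|
      (hdeg _ (h.edge_mem (m - r) (by omega)) _ (h.pathTail_subset hrm)
        (h.card_pathTail hrm)).trans_le' (by omega)
  obtain ⟨en, hen, hen_old⟩ := exists_mem_notMem_of_card_lt_card hmany
  obtain ⟨hen, htail⟩ := mem_filter.mp hen
  rw [mem_union, not_or] at hen_old
  have hnot_inside : ¬ en ⊆ (range m).image v := fun hsub =>
    hen_old.2 (mem_powersetCard.mpr ⟨hsub, hunif en hen⟩)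
  obtain ⟨x, hx, hx_new⟩ := not_subset.mp hnot_inside
  refine ⟨_, _, h.update hrm hen htail (fun hen_used => hen_old.1 ?_) hx
    fun hx_old => hx_new ?_⟩
  · obtain ⟨i, hi, hfi⟩ := hen_used
    exact mem_image.mpr ⟨i, mem_range.mpr hi, hfi⟩
  · obtain ⟨j, hj, hvj⟩ := hx_old
    exact mem_image.mpr ⟨j, mem_range.mpr hj, hvj⟩

end IsBergeTightPath

lemma exists_isBergeTightPath {G : Finset (Finset V)} {r k ℓ : ℕ} (hG : G.Nonempty)
    (hunif : ∀ e ∈ G, #e = k) (hr : 0 < r) (hrk : r ≤ k) (hrℓ : r ≤ ℓ)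
    (hdeg : ∀ e ∈ G, ∀ S ⊆ e, #S = r - 1 → ℓ - r + ℓ.choose k < setDegree G S) :
    ∃ v f, IsBergeTightPath G r ℓ v f := by
  obtain ⟨e, he⟩ := hG
  induction ℓ, hrℓ using Nat.le_induction with
  | base => exact IsBergeTightPath.exists_of_mem he hr (hrk.trans (hunif e he).ge)
  | succ m hrm ih =>
    have hchoose := Nat.choose_le_choose k (Nat.le_add_right m 1)
    obtain ⟨v, f, h⟩ := ih fun e he S hS hcard => (hdeg e he S hS hcard).trans_le' (by omega)
    exact h.exists_succ hrm hunif fun e he S hS hcard =>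
      (hdeg e he S hS hcard).trans_le' (by omega)

section Peeling

variable [Fintype V]

def truncatedDegreeSum (s D : ℕ) (G : Finset (Finset V)) : ℕ :=
  ∑ S ∈ univ.powersetCard s, min (setDegree G S) D

lemma truncatedDegreeSum_le (s D : ℕ) (G : Finset (Finset V)) :
    truncatedDegreeSum s D G ≤ (Fintype.card V).choose s * D := by
  have h := sum_le_card_nsmul (univ.powersetCard s) (fun S => min (setDegree G S) D) D
    fun _ _ => min_le_right _ _
  rwa [card_powersetCard, card_univ, smul_eq_mul] at h

lemma truncatedDegreeSum_erase_lt {s D : ℕ} {G : Finset (Finset V)} {e S : Finset V}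
    (he : e ∈ G) (hSe : S ⊆ e) (hS : #S = s) (hdeg : setDegree G S ≤ D) :
    truncatedDegreeSum s D (G.erase e) < truncatedDegreeSum s D G := by
  apply sum_lt_sum
  · exact fun T _ => min_le_min_right D (setDegree_mono (erase_subset e G) T)
  · refine ⟨S, mem_powersetCard.mpr ⟨subset_univ S, hS⟩, ?_⟩
    have := setDegree_erase_add_one he hSe
    omega

lemma exists_subset_forall_setDegree_gt' (s D : ℕ) (G : Finset (Finset V)) :
    ∃ G' ⊆ G, (∀ e ∈ G', ∀ S ⊆ e, #S = s → D < setDegree G' S) ∧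
      #G + truncatedDegreeSum s D G' ≤ #G' + truncatedDegreeSum s D G := by
  induction G using Finset.strongInduction with
  | _ G ih =>
    by_cases hcore : ∀ e ∈ G, ∀ S ⊆ e, #S = s → D < setDegree G S
    · exact ⟨G, Subset.rfl, hcore, le_rfl⟩
    push Not at hcore
    obtain ⟨e, he, S, hSe, hS, hdeg⟩ := hcore
    obtain ⟨G', hG', hcore', hcount⟩ := ih (G.erase e) (erase_ssubset he)
    refine ⟨G', hG'.trans (erase_subset e G), hcore', ?_⟩
    have hlt := truncatedDegreeSum_erase_lt he hSe hS hdeg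
    have hcard := card_erase_add_one he
    omega

lemma exists_subset_forall_setDegree_gt (s D : ℕ) (G : Finset (Finset V)) :
    ∃ G' ⊆ G, (∀ e ∈ G', ∀ S ⊆ e, #S = s → D < setDegree G' S) ∧
      #G ≤ #G' + (Fintype.card V).choose s * D := by
  obtain ⟨G', hG', hcore, hcount⟩ := exists_subset_forall_setDegree_gt' s D G
  have := truncatedDegreeSum_le s D G
  exact ⟨G', hG', hcore, by omega⟩

end Peeling

theorem card_le_of_not_bergeCopy_tightPath [Fintype V] {H : Finset (Finset V)} {r k ℓ : ℕ}
    (hr : 0 < r) (hrk : r ≤ k) (hrℓ : r ≤ ℓ) (hunif : ∀ e ∈ H, #e = k)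
    (hfree : ¬ BergeCopy (tightPath r ℓ) H) :
    #H ≤ (ℓ - r + ℓ.choose k) * (Fintype.card V).choose (r - 1) := by
  obtain ⟨G, hGH, hdeg, hcount⟩ :=
    exists_subset_forall_setDegree_gt (r - 1) (ℓ - r + ℓ.choose k) H
  obtain rfl | hG := G.eq_empty_or_nonempty
  · rwa [card_empty, zero_add, mul_comm] at hcount
  obtain ⟨v, f, hpath⟩ :=
    exists_isBergeTightPath hG (fun e he => hunif e (hGH he)) hr hrk hrℓ hdeg
  exact absurd (hpath.mono hGH).bergeCopy hfree

end BergeTightPath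

/-- A `k`-uniform hypergraph on `n` vertices with no Berge tight path `P_ℓ^{(r)}`
has at most `(ℓ - r + 1) * C(ℓ,k) * C(n,r-1)` hyperedges. -/
theorem stmt_9 {V : Type*} [Fintype V] [DecidableEq V] (r k ℓ n : ℕ)
    (hr : 3 ≤ r) (hrk : r < k) (hkl : k < ℓ)
    (hn : Fintype.card V = n)
    (H : Finset (Finset V)) (hunif : ∀ e ∈ H, e.card = k)
    (hfree : ¬ BergeCopy (tightPath r ℓ) H) :
    H.card ≤ (ℓ - r + 1) * ℓ.choose k * n.choose (r - 1) := by
  have hchoose : 0 < ℓ.choose k := Nat.choose_pos hkl.le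
  calc H.card ≤ (ℓ - r + ℓ.choose k) * n.choose (r - 1) :=
        hn ▸ card_le_of_not_bergeCopy_tightPath (by omega) hrk.le (by omega) hunif hfree
    _ ≤ (ℓ - r + 1) * ℓ.choose k * n.choose (r - 1) := by
        gcongr
        nlinarith
end
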